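/- In a finite-horizon MDP, the difference in expected return J(π) − J_surr(π) between the true objective and the surrogate objective obtained by evaluating π's trajectory log-likelihood under π_old's state distribution is bounded in magnitude by 4T(T−1)εα², where α = max_s D_TV(π(·|s), π_old(·|s)) and ε is the maximum absolute advantage, for rewards bounded in [0,1]. -/

import Mathlib

variable {S A : Type}

/-- Finite-horizon undiscounted value function `V_π(s, h)` (`h` steps remaining) in an
MDP with transition kernel `P` and reward `r`. -/
noncomputable def valueFn [Fintype S] [Fintype A]
    (P : S → A → S → ℝ) (r : S → A → ℝ) (π : S → A → ℝ) : ℕ → S → ℝ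
  | 0, _ => 0
  | h + 1, s => ∑ a, π s a * (r s a + ∑ s', P s a s' * valueFn P r π h s')

/-- Advantage `A_π(s, a)` with `h+1` steps remaining. -/
noncomputable def advFn [Fintype S] [Fintype A]
    (P : S → A → S → ℝ) (r : S → A → ℝ) (π : S → A → ℝ) (h : ℕ) (s : S) (a : A) : ℝ :=
  r s a + (∑ s', P s a s' * valueFn P r π h s') - valueFn P r π (h + 1) s

/-- State distribution at time `t` under policy `π` from initial distribution `ρ`. -/
noncomputable def stateDist [Fintype S] [Fintype A]
    (P : S → A → S → ℝ) (ρ : S → ℝ) (π : S → A → ℝ) : ℕ → S → ℝ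
  | 0, s => ρ s
  | t + 1, s' => ∑ s, ∑ a, stateDist P ρ π t s * π s a * P s a s'

/-- Expected return `J(π)` over horizon `T`. -/
noncomputable def expReturn [Fintype S] [Fintype A]
    (P : S → A → S → ℝ) (r : S → A → ℝ) (ρ : S → ℝ) (T : ℕ) (π : S → A → ℝ) : ℝ :=
  ∑ s, ρ s * valueFn P r π T s

/-- Total variation distance between pmfs on a finite set. -/
noncomputable def tvDist {A : Type} [Fintype A] (p q : A → ℝ) : ℝ :=
  (1 / 2) * ∑ a, |p a - q a|

/-!
By the performance-difference lemma, `J(π) - J(πold) = ∑_{t<T} E_{s ∼ d_t^π} Ā_t(s)`, where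
`Ā_t(s) = E_{a ∼ π(·|s)} A_{πold}(s, a)`; the surrogate evaluates the same sum under `d_t^{πold}`,
so the gap is `∑_t ⟨d_t^π - d_t^{πold}, Ā_t⟩`. Since `A_{πold}` averages to zero under `πold`,
`|Ā_t| ≤ 2εα`; and each transition moves the two state distributions apart by at most `2α` in
`ℓ¹`, so `‖d_t^π - d_t^{πold}‖₁ ≤ 2tα`. Summing `2tα · 2εα` over `t < T` with `t ≤ T - 1` gives
the bound.
-/

open Finset

section Finite

variable {ι κ : Type} [Fintype ι] [Fintype κ]

theorem abs_sum_mul_le_sum_abs_mul (w g : ι → ℝ) {C : ℝ} (hg : ∀ i, |g i| ≤ C) :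
    |∑ i, w i * g i| ≤ (∑ i, |w i|) * C :=
  calc |∑ i, w i * g i| ≤ ∑ i, |w i * g i| := abs_sum_le_sum_abs _ _
    _ ≤ ∑ i, |w i| * C := sum_le_sum fun i _ => by
        rw [abs_mul]; exact mul_le_mul_of_nonneg_left (hg i) (abs_nonneg _)
    _ = (∑ i, |w i|) * C := (sum_mul ..).symm

theorem sum_mul_le_of_mem_stdSimplex {w : ι → ℝ} (hw : w ∈ stdSimplex ℝ ι) {f : ι → ℝ} {C : ℝ}
    (hf : ∀ i, f i ≤ C) : ∑ i, w i * f i ≤ C :=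
  calc ∑ i, w i * f i ≤ ∑ i, w i * C :=
        sum_le_sum fun i _ => mul_le_mul_of_nonneg_left (hf i) (hw.1 i)
    _ = C := by rw [← sum_mul, hw.2, one_mul]

theorem sum_abs_sum_mul_le (w : ι → ℝ) {K : ι → κ → ℝ} (hK : ∀ i, K i ∈ stdSimplex ℝ κ) :
    ∑ j, |∑ i, w i * K i j| ≤ ∑ i, |w i| :=
  calc ∑ j, |∑ i, w i * K i j| ≤ ∑ j, ∑ i, |w i| * K i j :=
        sum_le_sum fun j _ => (abs_sum_le_sum_abs _ _).trans_eq <|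
          sum_congr rfl fun i _ => by rw [abs_mul, abs_of_nonneg ((hK i).1 j)]
    _ = ∑ i, |w i| := by
        rw [sum_comm]; simp_rw [← mul_sum, (hK _).2, mul_one]

theorem tvDist_nonneg (p q : ι → ℝ) : 0 ≤ tvDist p q := by
  unfold tvDist; positivity

theorem abs_sum_sub_mul_le_tvDist (p q f : ι → ℝ) {ε : ℝ} (hf : ∀ i, |f i| ≤ ε) :
    |∑ i, (p i - q i) * f i| ≤ 2 * ε * tvDist p q := by
  refine (abs_sum_mul_le_sum_abs_mul _ _ hf).trans_eq ?_
  rw [tvDist]; ring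

theorem sum_abs_mul_sub_mul_le {p q : ι → ℝ} (hp : p ∈ stdSimplex ℝ ι) (c : ℝ) {c' : ℝ}
    (hc' : 0 ≤ c') : ∑ i, |c * p i - c' * q i| ≤ |c - c'| + c' * (2 * tvDist p q) :=
  calc ∑ i, |c * p i - c' * q i| = ∑ i, |(c - c') * p i + c' * (p i - q i)| := by
        congr! 2; ring
    _ ≤ ∑ i, (|c - c'| * p i + c' * |p i - q i|) := sum_le_sum fun i _ => by
        refine (abs_add_le _ _).trans_eq ?_
        rw [abs_mul, abs_mul, abs_of_nonneg (hp.1 i), abs_of_nonneg hc']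
    _ = |c - c'| + c' * (2 * tvDist p q) := by
        rw [sum_add_distrib, ← mul_sum, ← mul_sum, hp.2, tvDist]; ring

end Finite

section MDP

variable [Fintype S] [Fintype A] (P : S → A → S → ℝ) (r : S → A → ℝ)

noncomputable def stepDist (π : S → A → ℝ) (d : S → ℝ) (s' : S) : ℝ :=
  ∑ s, ∑ a, d s * π s a * P s a s'

theorem stateDist_succ (ρ : S → ℝ) (π : S → A → ℝ) (t : ℕ) :
    stateDist P ρ π (t + 1) = stepDist P π (stateDist P ρ π t) :=
  rfl

theorem stateDist_succ' (ρ : S → ℝ) (π : S → A → ℝ) :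
    ∀ t, stateDist P ρ π (t + 1) = stateDist P (stepDist P π ρ) π t
  | 0 => rfl
  | t + 1 => by rw [stateDist_succ, stateDist_succ' ρ π t, stateDist_succ]

theorem sum_stepDist_mul (π : S → A → ℝ) (d f : S → ℝ) :
    ∑ s', stepDist P π d s' * f s' = ∑ s, d s * ∑ a, π s a * ∑ s', P s a s' * f s' := by
  simp only [stepDist, sum_mul, mul_sum]
  rw [sum_comm]
  refine sum_congr rfl fun s _ => ?_
  rw [sum_comm]
  exact sum_congr rfl fun a _ => sum_congr rfl fun s' _ => by ring

variable {P}

theorem stepDist_mem_stdSimplex (hP : ∀ s a, P s a ∈ stdSimplex ℝ S) {π : S → A → ℝ}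
    (hπ : ∀ s, π s ∈ stdSimplex ℝ A) {d : S → ℝ} (hd : d ∈ stdSimplex ℝ S) :
    stepDist P π d ∈ stdSimplex ℝ S := by
  refine ⟨fun s' => ?_, ?_⟩
  · exact sum_nonneg fun s _ => sum_nonneg fun a _ =>
      mul_nonneg (mul_nonneg (hd.1 s) ((hπ s).1 a)) ((hP s a).1 s')
  · simpa [(hP _ _).2, (hπ _).2, hd.2] using sum_stepDist_mul P π d 1

theorem stateDist_mem_stdSimplex (hP : ∀ s a, P s a ∈ stdSimplex ℝ S) {ρ : S → ℝ}
    (hρ : ρ ∈ stdSimplex ℝ S) {π : S → A → ℝ} (hπ : ∀ s, π s ∈ stdSimplex ℝ A) :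
    ∀ t, stateDist P ρ π t ∈ stdSimplex ℝ S
  | 0 => hρ
  | t + 1 => stepDist_mem_stdSimplex hP hπ (stateDist_mem_stdSimplex hP hρ hπ t)

theorem sum_abs_stepDist_sub_le (hP : ∀ s a, P s a ∈ stdSimplex ℝ S) {π π' : S → A → ℝ}
    (hπ : ∀ s, π s ∈ stdSimplex ℝ A) (d : S → ℝ) {d' : S → ℝ} (hd' : ∀ s, 0 ≤ d' s) :
    ∑ s', |stepDist P π d s' - stepDist P π' d' s'|
      ≤ ∑ s, |d s - d' s| + 2 * ∑ s, d' s * tvDist (π s) (π' s) := by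
  have hdiff : ∀ s', stepDist P π d s' - stepDist P π' d' s'
      = ∑ x : S × A, (d x.1 * π x.1 x.2 - d' x.1 * π' x.1 x.2) * P x.1 x.2 s' := fun s' => by
    simp only [stepDist, Fintype.sum_prod_type, ← sum_sub_distrib, sub_mul]
  calc ∑ s', |stepDist P π d s' - stepDist P π' d' s'|
      ≤ ∑ x : S × A, |d x.1 * π x.1 x.2 - d' x.1 * π' x.1 x.2| := by
        simp_rw [hdiff]; exact sum_abs_sum_mul_le _ fun x => hP x.1 x.2
    _ ≤ ∑ s, (|d s - d' s| + d' s * (2 * tvDist (π s) (π' s))) := by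
        simp only [Fintype.sum_prod_type]
        exact sum_le_sum fun s _ => sum_abs_mul_sub_mul_le (hπ s) _ (hd' s)
    _ = ∑ s, |d s - d' s| + 2 * ∑ s, d' s * tvDist (π s) (π' s) := by
        rw [sum_add_distrib, mul_sum]; congr! 2; ring

theorem sum_abs_stateDist_sub_le (hP : ∀ s a, P s a ∈ stdSimplex ℝ S) {ρ : S → ℝ}
    (hρ : ρ ∈ stdSimplex ℝ S) {π π' : S → A → ℝ} (hπ : ∀ s, π s ∈ stdSimplex ℝ A)
    (hπ' : ∀ s, π' s ∈ stdSimplex ℝ A) {α : ℝ} (hα : ∀ s, tvDist (π s) (π' s) ≤ α) :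
    ∀ t : ℕ, ∑ s, |stateDist P ρ π t s - stateDist P ρ π' t s| ≤ 2 * t * α
  | 0 => by simp [stateDist]
  | t + 1 => by
    have hd' := stateDist_mem_stdSimplex hP hρ hπ' t
    have hstep := sum_abs_stepDist_sub_le (π' := π') hP hπ (stateDist P ρ π t) hd'.1
    have hdrift := sum_mul_le_of_mem_stdSimplex hd' hα
    have ih := sum_abs_stateDist_sub_le hP hρ hπ hπ' hα t
    rw [stateDist_succ, stateDist_succ]
    push_cast
    linarith

variable (P)

theorem sum_mul_advFn_self {π : S → A → ℝ} {s : S} (hs : ∑ a, π s a = 1) (h : ℕ) :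
    ∑ a, π s a * advFn P r π h s a = 0 := by
  simp only [advFn, mul_sub, sum_sub_distrib, ← sum_mul, hs, one_mul]
  rw [valueFn, sub_self]

theorem abs_sum_mul_advFn_le (π : S → A → ℝ) {π' : S → A → ℝ} {s : S} (hs : ∑ a, π' s a = 1)
    {h : ℕ} {ε : ℝ} (hε : ∀ a, |advFn P r π' h s a| ≤ ε) :
    |∑ a, π s a * advFn P r π' h s a| ≤ 2 * ε * tvDist (π s) (π' s) := by
  rw [← sub_zero (∑ a, _), ← sum_mul_advFn_self P r hs h, ← sum_sub_distrib]
  simp_rw [← sub_mul]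
  exact abs_sum_sub_mul_le_tvDist _ _ _ hε

theorem valueFn_succ_sub {π : S → A → ℝ} (π' : S → A → ℝ) {s : S} (hs : ∑ a, π s a = 1) (h : ℕ) :
    valueFn P r π (h + 1) s - valueFn P r π' (h + 1) s
      = ∑ a, π s a * advFn P r π' h s a
        + ∑ a, π s a * ∑ s', P s a s' * (valueFn P r π h s' - valueFn P r π' h s') := by
  have hV : valueFn P r π' (h + 1) s = ∑ a, π s a * valueFn P r π' (h + 1) s := by
    rw [← sum_mul, hs, one_mul]
  rw [hV, valueFn]
  simp only [advFn, mul_add, mul_sub, sum_add_distrib, sum_sub_distrib]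
  ring

/-- The finite-horizon performance-difference lemma. -/
theorem sum_mul_valueFn_sub {π : S → A → ℝ} (π' : S → A → ℝ) (hπ : ∀ s, ∑ a, π s a = 1) :
    ∀ (h : ℕ) (d : S → ℝ), ∑ s, d s * (valueFn P r π h s - valueFn P r π' h s)
      = ∑ t ∈ range h, ∑ s, stateDist P d π t s * ∑ a, π s a * advFn P r π' (h - t - 1) s a
  | 0, d => by simp [valueFn]
  | h + 1, d => by
    rw [sum_range_succ']
    simp only [stateDist_succ', Nat.add_sub_add_right, Nat.sub_zero, Nat.add_sub_cancel]
    rw [← sum_mul_valueFn_sub π' hπ h (stepDist P π d), sum_stepDist_mul]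
    simp only [valueFn_succ_sub P r π' (hπ _), mul_add, sum_add_distrib, stateDist]
    ring

theorem expReturn_sub_expReturn (ρ : S → ℝ) (T : ℕ) {π : S → A → ℝ} (π' : S → A → ℝ)
    (hπ : ∀ s, ∑ a, π s a = 1) :
    expReturn P r ρ T π - expReturn P r ρ T π'
      = ∑ t ∈ range T, ∑ s, stateDist P ρ π t s * ∑ a, π s a * advFn P r π' (T - t - 1) s a := by
  rw [← sum_mul_valueFn_sub P r π' hπ, expReturn, expReturn, ← sum_sub_distrib]
  simp_rw [mul_sub]

end MDP

theorem trpo_finite_horizon_bound_general [Fintype S] [Fintype A]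
    (P : S → A → S → ℝ) (r : S → A → ℝ) (ρ : S → ℝ) (T : ℕ)
    (hP : ∀ s a, (∀ s', 0 ≤ P s a s') ∧ ∑ s', P s a s' = 1)
    (hρ : (∀ s, 0 ≤ ρ s) ∧ ∑ s, ρ s = 1)
    (π πold : S → A → ℝ)
    (hπ : ∀ s, (∀ a, 0 ≤ π s a) ∧ ∑ a, π s a = 1)
    (hπold : ∀ s, (∀ a, 0 ≤ πold s a) ∧ ∑ a, πold s a = 1)
    (α ε : ℝ)
    (hα : ∀ s, tvDist (π s) (πold s) ≤ α)
    (hε : ∀ h s a, h < T → |advFn P r πold h s a| ≤ ε) :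
    |expReturn P r ρ T π -
        (expReturn P r ρ T πold +
          ∑ t ∈ Finset.range T, ∑ s, stateDist P ρ πold t s *
            ∑ a, π s a * advFn P r πold (T - t - 1) s a)| ≤
      4 * T * (T - 1) * ε * α ^ 2 := by
  rcases T.eq_zero_or_pos with rfl | hT
  · simp [expReturn, valueFn]
  obtain ⟨s₀, -, -⟩ := exists_ne_zero_of_sum_ne_zero (hρ.2 ▸ one_ne_zero : ∑ s, ρ s ≠ 0)
  obtain ⟨a₀, -, -⟩ :=
    exists_ne_zero_of_sum_ne_zero ((hπ s₀).2 ▸ one_ne_zero : ∑ a, π s₀ a ≠ 0)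
  have hα₀ : 0 ≤ α := (tvDist_nonneg _ _).trans (hα s₀)
  have hε₀ : 0 ≤ ε := (abs_nonneg _).trans (hε 0 s₀ a₀ hT)
  have hadv : ∀ t s, |∑ a, π s a * advFn P r πold (T - t - 1) s a| ≤ 2 * ε * α :=
    fun t s => (abs_sum_mul_advFn_le P r π (hπold s).2 fun a =>
      hε _ s a (by omega)).trans (by gcongr; exact hα s)
  have hdrift : ∀ t ∈ range T,
      ∑ s, |stateDist P ρ π t s - stateDist P ρ πold t s| ≤ 2 * (T - 1) * α := fun t ht => by
    have ht' : (t : ℝ) + 1 ≤ T := by exact_mod_cast mem_range.1 ht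
    refine (sum_abs_stateDist_sub_le hP hρ hπ hπold hα t).trans ?_
    gcongr; linarith
  rw [sub_add_eq_sub_sub, expReturn_sub_expReturn P r ρ T πold fun s => (hπ s).2,
    ← sum_sub_distrib]
  simp_rw [← sum_sub_distrib, ← sub_mul]
  calc _ ≤ ∑ t ∈ range T, (∑ s, |stateDist P ρ π t s - stateDist P ρ πold t s|) * (2 * ε * α) :=
        (abs_sum_le_sum_abs _ _).trans <| sum_le_sum fun t _ =>
          abs_sum_mul_le_sum_abs_mul _ _ (hadv t)
    _ ≤ ∑ _t ∈ range T, 2 * (T - 1) * α * (2 * ε * α) :=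
        sum_le_sum fun t ht => by gcongr; exact hdrift t ht
    _ = 4 * T * (T - 1) * ε * α ^ 2 := by
        rw [sum_const, card_range, nsmul_eq_mul]; ring

/-- Finite-horizon undiscounted TRPO surrogate bound: with
`L_{πold}(π) = J(πold) + ∑_{t<T} E_{s∼d_t^{πold}} E_{a∼π(·|s)}[A_{πold}(s,a)]`, the gap
`|J(π) − L_{πold}(π)|` is at most `4T(T−1)εα²`, where `α = max_s D_TV(π(·|s),πold(·|s))`
and `ε` bounds the advantage magnitudes, for per-trajectory returns in `[0,1]`. -/
theorem trpo_finite_horizon_bound [Fintype S] [Fintype A]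
    (P : S → A → S → ℝ) (r : S → A → ℝ) (ρ : S → ℝ) (T : ℕ)
    (hP : ∀ s a, (∀ s', 0 ≤ P s a s') ∧ ∑ s', P s a s' = 1)
    (hρ : (∀ s, 0 ≤ ρ s) ∧ ∑ s, ρ s = 1)
    (hr : ∀ s a, 0 ≤ r s a)
    (hret : ∀ (ss : ℕ → S) (as : ℕ → A), ∑ t ∈ Finset.range T, r (ss t) (as t) ≤ 1)
    (π πold : S → A → ℝ)
    (hπ : ∀ s, (∀ a, 0 ≤ π s a) ∧ ∑ a, π s a = 1)
    (hπold : ∀ s, (∀ a, 0 ≤ πold s a) ∧ ∑ a, πold s a = 1)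
    (α ε : ℝ)
    (hα : ∀ s, tvDist (π s) (πold s) ≤ α)
    (hε : ∀ h s a, h < T → |advFn P r πold h s a| ≤ ε) :
    |expReturn P r ρ T π -
        (expReturn P r ρ T πold +
          ∑ t ∈ Finset.range T, ∑ s, stateDist P ρ πold t s *
            ∑ a, π s a * advFn P r πold (T - t - 1) s a)| ≤
      4 * T * (T - 1) * ε * α ^ 2 :=
  trpo_finite_horizon_bound_general P r ρ T hP hρ π πold hπ hπold α ε hα hε
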